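/- arXiv:math/0607670 — 5 statements merged into one kernel-verified Lean document; each statement's English description precedes it below -/
import Mathlib

section
/- Let T > 0 and let g : [0,T] → ℝ be a function such that (i) for all a, b ∈ [0,T] and λ ∈ [0,1], g(λa + (1−λ)b) ≤ max{g(a), g(b)}, and (ii) g has a right derivative at 0 with g'(0) > 0. Then g is non-decreasing on [0,T]. -/
/-! If `g y < g x` for some `x ≤ y`, quasiconvexity on `[0, y]` gives `g x ≤ max (g 0) (g y)`,
hence `g y < g 0` and `g ≤ g 0` on all of `[0, y]`. Then `0` is a one-sided local maximum of `g`,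
and Fermat's theorem forces `g'(0) ≤ 0`. -/

open Set

theorem IsLocalMaxOn.hasDerivWithinAt_Ici_nonpos {f : ℝ → ℝ} {a f' : ℝ}
    (h : IsLocalMaxOn f (Ici a) a) (hf : HasDerivWithinAt f f' (Ici a) a) : f' ≤ 0 := by
  have hone : (1 : ℝ) ∈ posTangentConeAt (Ici a) a :=
    mem_posTangentConeAt_of_segment_subset
      ((segment_subset_Icc (by linarith)).trans Icc_subset_Ici_self)
  simpa using h.hasFDerivWithinAt_nonpos hf.hasFDerivWithinAt hone

section Quasiconvex

variable {s : Set ℝ} {f : ℝ → ℝ} {a b x : ℝ}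

theorem quasiconvexOn_of_forall_le_max (hs : Convex ℝ s)
    (h : ∀ a ∈ s, ∀ b ∈ s, ∀ l ∈ Icc (0 : ℝ) 1, f (l * a + (1 - l) * b) ≤ max (f a) (f b)) :
    QuasiconvexOn ℝ s f := by
  refine quasiconvexOn_iff_le_max.2 ⟨hs, fun x hx y hy μ ν hμ hν hμν => ?_⟩
  obtain rfl : ν = 1 - μ := by linarith
  exact h x hx y hy μ ⟨hμ, by linarith⟩

theorem QuasiconvexOn.le_max_of_mem_Icc (hf : QuasiconvexOn ℝ s f) (ha : a ∈ s) (hb : b ∈ s)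
    (hx : x ∈ Icc a b) : f x ≤ max (f a) (f b) := by
  rcases le_total a b with hab | hba
  · rw [← segment_eq_Icc hab] at hx
    exact ((hf _).segment_subset ⟨ha, le_max_left _ _⟩ ⟨hb, le_max_right _ _⟩ hx).2
  · obtain rfl : x = a := le_antisymm (hx.2.trans hba) hx.1
    exact le_max_left _ _

theorem QuasiconvexOn.monotoneOn_Icc_of_not_isLocalMaxOn (hf : QuasiconvexOn ℝ (Icc a b) f)
    (hmax : ¬ IsLocalMaxOn f (Ici a) a) : MonotoneOn f (Icc a b) := by
  intro x hx y hy hxy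
  by_contra! hdec
  have ha : a ∈ Icc a b := ⟨le_rfl, hx.1.trans hx.2⟩
  have hya : f y < f a := by
    have := hf.le_max_of_mem_Icc ha hy ⟨hx.1, hxy⟩
    exact hdec.trans_le ((le_max_iff.1 this).resolve_right hdec.not_ge)
  have hay : a < y := lt_of_le_of_ne (hx.1.trans hxy) (by rintro rfl; exact hya.false)
  refine hmax (Filter.mem_of_superset (Ico_mem_nhdsGE hay) fun z hz => ?_)
  have := hf.le_max_of_mem_Icc ha hy ⟨hz.1, hz.2.le⟩
  rwa [max_eq_left hya.le] at this

end Quasiconvex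

theorem quasiconvex_pos_right_deriv_monotone_general
    (T : ℝ) (g : ℝ → ℝ) (d : ℝ)
    (hqc : ∀ a ∈ Set.Icc 0 T, ∀ b ∈ Set.Icc 0 T, ∀ l ∈ Set.Icc (0:ℝ) 1,
      g (l * a + (1 - l) * b) ≤ max (g a) (g b))
    (hderiv : HasDerivWithinAt g d (Set.Ici 0) 0) (hd : 0 < d) :
    MonotoneOn g (Set.Icc 0 T) :=
  (quasiconvexOn_of_forall_le_max (convex_Icc 0 T) hqc).monotoneOn_Icc_of_not_isLocalMaxOn
    fun hmax => hd.not_ge (hmax.hasDerivWithinAt_Ici_nonpos hderiv)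

theorem quasiconvex_pos_right_deriv_monotone
    (T : ℝ) (hT : 0 < T) (g : ℝ → ℝ) (d : ℝ)
    (hqc : ∀ a ∈ Set.Icc 0 T, ∀ b ∈ Set.Icc 0 T, ∀ l ∈ Set.Icc (0:ℝ) 1,
      g (l * a + (1 - l) * b) ≤ max (g a) (g b))
    (hderiv : HasDerivWithinAt g d (Set.Ici 0) 0) (hd : 0 < d) :
    MonotoneOn g (Set.Icc 0 T) :=
  quasiconvex_pos_right_deriv_monotone_general T g d hqc hderiv hd
end

section
/- Let a, b ∈ ℂⁿ, A ∈ ℂ^{n×n}, and define G(z) = a − ⟨z,a⟩z − (Az + ⟨z,b⟩z) for z ∈ 𝔹ⁿ. If G is semicomplete on 𝔹ⁿ (i.e., for every z ∈ 𝔹ⁿ the flow of G starting at z stays in 𝔹ⁿ for all t ≥ 0), then |⟨b,u⟩| ≤ Re⟨Au, u⟩ for all unit vectors u ∈ ∂𝔹ⁿ. -/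
open Metric Set

set_option maxHeartbeats 1000000 in
lemma flow_boundary {n : ℕ} (G : EuclideanSpace ℂ (Fin n) → EuclideanSpace ℂ (Fin n))
    (hGc : Continuous G)
    (hsemi : ∀ z ∈ ball (0 : EuclideanSpace ℂ (Fin n)) 1,
      ∃ w : ℝ → EuclideanSpace ℂ (Fin n), w 0 = z ∧
        ∀ t, 0 ≤ t → w t ∈ ball (0 : EuclideanSpace ℂ (Fin n)) 1 ∧
          HasDerivWithinAt w (G (w t)) (Set.Ici 0) t)
    (u : EuclideanSpace ℂ (Fin n)) (hu : ‖u‖ = 1) :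
    (inner (𝕜 := ℂ) u (G u) : ℂ).re ≤ 0 := by
  by_contra hpos
  push_neg at hpos
  set F : EuclideanSpace ℂ (Fin n) → ℝ := fun z => (inner (𝕜 := ℂ) z (G z) : ℂ).re with hF
  have hFc : Continuous F := Complex.continuous_re.comp (continuous_id.inner hGc)
  set ε : ℝ := F u / 2 with hε
  have hε0 : 0 < ε := by positivity
  -- neighborhood where F > ε
  have hev : ∀ᶠ z in nhds u, ε < F z :=
    (hFc.continuousAt (x := u)).eventually (eventually_gt_nhds (by simp [hε]; linarith))
  obtain ⟨ρ, hρ0, hρ⟩ := Metric.eventually_nhds_iff.1 hev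
  -- bound on G on the closed ball
  obtain ⟨M0, hM0⟩ := (isCompact_closedBall (0 : EuclideanSpace ℂ (Fin n)) 1).exists_bound_of_continuousOn hGc.continuousOn
  set M : ℝ := max M0 1 with hM
  have hM1 : (1:ℝ) ≤ M := le_max_right _ _
  have hMb : ∀ z ∈ closedBall (0 : EuclideanSpace ℂ (Fin n)) 1, ‖G z‖ ≤ M :=
    fun z hz => (hM0 z hz).trans (le_max_left _ _)
  have hM0' : 0 < M := lt_of_lt_of_le one_pos hM1
  set T : ℝ := ρ / (2 * M) with hT
  have hT0 : 0 < T := by positivity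
  set s : ℝ := min (ρ/2) (min (ε*T) 1) with hs
  have hs0 : 0 < s := by positivity
  have hs1 : s ≤ 1 := (min_le_right _ _).trans (min_le_right _ _)
  have hsρ : s ≤ ρ/2 := min_le_left _ _
  have hsε : s ≤ ε*T := (min_le_right _ _).trans (min_le_left _ _)
  set r : ℝ := 1 - s/2 with hr
  have hr0 : 0 < r := by simp only [hr]; linarith
  have hr1 : r < 1 := by simp only [hr]; linarith
  have hz : ((r : ℂ) • u) ∈ ball (0 : EuclideanSpace ℂ (Fin n)) 1 := by
    simp [mem_ball_zero_iff, norm_smul, hu, Complex.norm_of_nonneg hr0.le, abs_of_pos hr0, hr1]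
  obtain ⟨w, hw0, hww⟩ := hsemi _ hz
  -- within Icc 0 T
  have hIcc : ∀ t ∈ Icc (0:ℝ) T, HasDerivWithinAt w (G (w t)) (Icc 0 T) t :=
    fun t ht => ((hww t ht.1).2).mono Icc_subset_Ici_self
  have hwball : ∀ t ∈ Icc (0:ℝ) T, w t ∈ closedBall (0 : EuclideanSpace ℂ (Fin n)) 1 :=
    fun t ht => ball_subset_closedBall (hww t ht.1).1
  have hGb : ∀ t ∈ Icc (0:ℝ) T, ‖G (w t)‖ ≤ M := fun t ht => hMb _ (hwball t ht)
  -- displacement bound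
  have hdisp : ∀ t ∈ Icc (0:ℝ) T, ‖w t - w 0‖ ≤ M * t := by
    intro t ht
    have := (convex_Icc (0:ℝ) T).norm_image_sub_le_of_norm_hasDerivWithin_le hIcc hGb
      (left_mem_Icc.2 hT0.le) ht
    simpa [Real.norm_of_nonneg ht.1] using this
  have hw0u : ‖w 0 - u‖ = s/2 := by
    rw [hw0]
    have : (r : ℂ) • u - u = ((r : ℂ) - 1) • u := by rw [sub_smul, one_smul]
    rw [this, norm_smul, hu, mul_one]
    have : ((r:ℂ) - 1) = ((r - 1 : ℝ) : ℂ) := by push_cast; ring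
    rw [this, Complex.norm_real, Real.norm_eq_abs, abs_of_nonpos (by linarith), hr]
    ring
  have hnear : ∀ t ∈ Icc (0:ℝ) T, ε < F (w t) := by
    intro t ht
    apply hρ
    have h1 : ‖w t - u‖ ≤ M * t + s/2 := by
      calc ‖w t - u‖ = ‖(w t - w 0) + (w 0 - u)‖ := by rw [sub_add_sub_cancel]
        _ ≤ ‖w t - w 0‖ + ‖w 0 - u‖ := norm_add_le _ _
        _ ≤ M * t + s/2 := by rw [hw0u]; linarith [hdisp t ht]
    have hMtT : M * t ≤ ρ/2 := by
      calc M * t ≤ M * T := by nlinarith [ht.2, hM0']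
        _ = ρ/2 := by rw [hT]; field_simp
    calc dist (w t) u = ‖w t - u‖ := dist_eq_norm _ _
      _ ≤ ρ/2 + s/2 := by linarith
      _ < ρ := by linarith [hsρ, hρ0]
  -- squared norm along the flow
  set g : ℝ → ℝ := fun t => (inner (𝕜 := ℂ) (w t) (w t) : ℂ).re with hg
  have hgderiv : ∀ t ∈ Icc (0:ℝ) T, HasDerivWithinAt g (2 * F (w t)) (Icc 0 T) t := by
    intro t ht
    have h1 := (hIcc t ht).inner ℂ (hIcc t ht)
    have h2 := Complex.reCLM.hasFDerivAt.comp_hasDerivWithinAt t h1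
    refine HasDerivWithinAt.congr_deriv h2 ?_
    change (inner ℂ (w t) (G (w t)) + inner ℂ (G (w t)) (w t)).re = 2 * F (w t)
    simp only [Complex.add_re, hF]
    rw [← inner_conj_symm (w t) (G (w t)), Complex.conj_re]
    ring
  have hwle1 : ∀ t ∈ Icc (0:ℝ) T, ‖w t‖ ≤ 1 := by
    intro t ht; simpa [mem_closedBall_zero_iff] using hwball t ht
  have hFle : ∀ t ∈ Icc (0:ℝ) T, F (w t) ≤ M := by
    intro t ht
    have h1 : F (w t) ≤ ‖w t‖ * ‖G (w t)‖ := by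
      simpa only [RCLike.re_to_complex] using re_inner_le_norm (𝕜 := ℂ) (w t) (G (w t))
    have h2 : ‖w t‖ * ‖G (w t)‖ ≤ 1 * M :=
      mul_le_mul (hwle1 t ht) (hGb t ht) (norm_nonneg _) zero_le_one
    linarith
  have hεM : ε ≤ M := by
    have h1 : F u ≤ ‖u‖ * ‖G u‖ := by simpa only [RCLike.re_to_complex] using re_inner_le_norm (𝕜 := ℂ) u (G u)
    have h2 : ‖G u‖ ≤ M := hMb u (by simp [mem_closedBall_zero_iff, hu])
    rw [hu, one_mul] at h1
    simp only [hε]; linarith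
  have hφderiv : ∀ t ∈ Icc (0:ℝ) T,
      HasDerivWithinAt (fun t => 2*M*t - g t) (2*M - 2*F (w t)) (Icc 0 T) t := by
    intro t ht
    have hid : HasDerivWithinAt (fun t : ℝ => 2*M*t) (2*M) (Icc 0 T) t := by
      simpa using (hasDerivWithinAt_id t (Icc (0:ℝ) T)).const_mul (2*M)
    exact hid.sub (hgderiv t ht)
  have hb : ∀ t ∈ Icc (0:ℝ) T, ‖2*M - 2*F (w t)‖ ≤ 2*M - 2*ε := by
    intro t ht
    rw [Real.norm_eq_abs, abs_le]
    constructor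
    · nlinarith [hFle t ht, hεM]
    · nlinarith [hnear t ht]
  have hMVT := (convex_Icc (0:ℝ) T).norm_image_sub_le_of_norm_hasDerivWithin_le hφderiv hb
    (left_mem_Icc.2 hT0.le) (right_mem_Icc.2 hT0.le)
  -- endpoints
  have hgnorm : ∀ t, g t = ‖w t‖^2 := by
    intro t
    simpa only [RCLike.re_to_complex] using inner_self_eq_norm_sq (𝕜 := ℂ) (w t)
  have hg0 : g 0 = r^2 := by
    have hn : ‖w 0‖ = r := by
      rw [hw0, norm_smul, hu, mul_one, Complex.norm_real, Real.norm_eq_abs, abs_of_pos hr0]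
    rw [hgnorm 0, hn]
  have hgT : g T < 1 := by
    have hwT : ‖w T‖ < 1 := by simpa [mem_ball_zero_iff] using (hww T hT0.le).1
    rw [hgnorm T]; nlinarith [norm_nonneg (w T)]
  have hub : (2*M*T - g T) - (2*M*0 - g 0) ≤ (2*M - 2*ε) * ‖T - (0:ℝ)‖ :=
    (le_abs_self _).trans hMVT
  rw [sub_zero, Real.norm_of_nonneg hT0.le] at hub
  -- contradiction
  have hεT : 0 < ε * T := by positivity
  have h1 : g 0 + 2*ε*T ≤ g T := by linarith
  have haux : ∀ x : ℝ, 1 - x ≤ (1 - x/2)^2 := fun x => by nlinarith [sq_nonneg x]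
  have h3 : 1 - s ≤ g 0 := by rw [hg0, hr]; exact haux s
  linarith

theorem quadratic_generator_necessity
    (n : ℕ) (a b : EuclideanSpace ℂ (Fin n))
    (A : EuclideanSpace ℂ (Fin n) →ₗ[ℂ] EuclideanSpace ℂ (Fin n))
    (G : EuclideanSpace ℂ (Fin n) → EuclideanSpace ℂ (Fin n))
    (hG : ∀ z, G z = a - (inner (𝕜 := ℂ) a z : ℂ) • z - (A z + (inner (𝕜 := ℂ) b z : ℂ) • z))
    (hsemi : ∀ z ∈ ball (0 : EuclideanSpace ℂ (Fin n)) 1,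
      ∃ w : ℝ → EuclideanSpace ℂ (Fin n), w 0 = z ∧
        ∀ t, 0 ≤ t → w t ∈ ball (0 : EuclideanSpace ℂ (Fin n)) 1 ∧
          HasDerivWithinAt w (G (w t)) (Set.Ici 0) t) :
    ∀ u : EuclideanSpace ℂ (Fin n), ‖u‖ = 1 →
      ‖(inner (𝕜 := ℂ) u b : ℂ)‖ ≤ (inner (𝕜 := ℂ) u (A u) : ℂ).re := by
  have hGeq : G = fun z => a - (inner (𝕜 := ℂ) a z : ℂ) • z
      - (A z + (inner (𝕜 := ℂ) b z : ℂ) • z) := funext hG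
  have hA : Continuous fun z : EuclideanSpace ℂ (Fin n) => A z :=
    A.continuous_of_finiteDimensional
  have hGc : Continuous G := by
    rw [hGeq]
    exact (continuous_const.sub ((continuous_const.inner (𝕜 := ℂ) continuous_id).smul continuous_id)).sub
      (hA.add ((continuous_const.inner (𝕜 := ℂ) continuous_id).smul continuous_id))
  have key : ∀ v : EuclideanSpace ℂ (Fin n), ‖v‖ = 1 →
      0 ≤ (inner (𝕜 := ℂ) v b : ℂ).re + (inner (𝕜 := ℂ) v (A v) : ℂ).re := by
    intro v hv
    have h0 := flow_boundary G hGc hsemi v hv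
    have hvv : (inner (𝕜 := ℂ) v v : ℂ) = 1 := by
      rw [inner_self_eq_norm_sq_to_K, hv]; norm_num
    rw [hG v] at h0
    simp only [inner_sub_right, inner_add_right, inner_smul_right, hvv, mul_one] at h0
    have hav : ((inner (𝕜 := ℂ) a v : ℂ)).re = ((inner (𝕜 := ℂ) v a : ℂ)).re := by
      rw [← inner_conj_symm v a, Complex.conj_re]
    have hbv : ((inner (𝕜 := ℂ) b v : ℂ)).re = ((inner (𝕜 := ℂ) v b : ℂ)).re := by
      rw [← inner_conj_symm v b, Complex.conj_re]
    simp only [Complex.sub_re, Complex.add_re] at h0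
    linarith
  intro u hu
  by_cases hc : (inner (𝕜 := ℂ) u b : ℂ) = 0
  · rw [hc]
    simp only [norm_zero]
    have h1 := key u hu
    have h2 : ((inner (𝕜 := ℂ) u b : ℂ)).re = 0 := by rw [hc]; simp
    linarith
  · set c : ℂ := inner (𝕜 := ℂ) u b with hcdef
    set θ : ℂ := -(c / (‖c‖ : ℂ)) with hθdef
    have habs : (‖c‖ : ℝ) ≠ 0 := norm_ne_zero_iff.mpr hc
    have hθabs : ‖θ‖ = 1 := by
      rw [hθdef, norm_neg, norm_div, Complex.norm_real, Real.norm_eq_abs, abs_of_nonneg (norm_nonneg c)]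
      field_simp
    have hv : ‖θ • u‖ = 1 := by
      rw [norm_smul, hu, mul_one, hθabs]
    have h1 := key (θ • u) hv
    have hinb : (inner (𝕜 := ℂ) (θ • u) b : ℂ) = -(‖c‖ : ℂ) := by
      rw [inner_smul_left, ← hcdef, hθdef]
      rw [map_neg, map_div₀, Complex.conj_ofReal]
      field_simp
      rw [mul_comm, Complex.mul_conj, Complex.normSq_eq_norm_sq]
      have hne : ((‖c‖ : ℝ) : ℂ) ≠ 0 := Complex.ofReal_ne_zero.mpr habs
      field_simp
      push_cast
      ring
    have hinA : (inner (𝕜 := ℂ) (θ • u) (A (θ • u)) : ℂ) = inner (𝕜 := ℂ) u (A u) := by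
      rw [map_smul, inner_smul_left, inner_smul_right, ← mul_assoc, mul_comm (starRingEnd ℂ θ) θ,
        Complex.mul_conj, Complex.normSq_eq_norm_sq, hθabs]
      norm_num
    rw [hinb, hinA] at h1
    simp only [Complex.neg_re, Complex.ofReal_re] at h1
    linarith
end

section
/- The map F : 𝔹² → ℂ², F(z₁,z₂) = (0, −z₂/(1−z₁)), is an infinitesimal generator of a semigroup of holomorphic self-maps of 𝔹²: for each (z₁,z₂) ∈ 𝔹² the solution of the ODE w'(t) = F(w(t)) with w(0)=(z₁,z₂) is w(t) = (z₁, z₂·e^{−t/(1−z₁)}), which remains in 𝔹² for all t ≥ 0, and the resulting semigroup fixes every point of the slice {(ζ,0) : ζ ∈ 𝔻}. -/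
open Complex

/-- The open unit ball of ℂ². -/
def B2 : Set (ℂ × ℂ) := {z : ℂ × ℂ | ‖z.1‖^2 + ‖z.2‖^2 < 1}

/-!
The flow keeps the first coordinate `z₁` fixed and multiplies the second by
`exp (-t / (1 - z₁))`. For `‖z₁‖ < 1` the number `1 - z₁` lies in the right half-plane, hence so
does its inverse, so this factor has modulus at most `1` for `t ≥ 0` and the flow cannot leave
the ball.
-/

lemma norm_fst_lt_one_of_mem_B2 {z : ℂ × ℂ} (hz : z ∈ B2) : ‖z.1‖ < 1 := by
  have hz' : ‖z.1‖ ^ 2 + ‖z.2‖ ^ 2 < 1 := hz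
  nlinarith [norm_nonneg z.1, sq_nonneg ‖z.2‖]

lemma mk_mul_mem_B2 {z : ℂ × ℂ} (hz : z ∈ B2) {u : ℂ} (hu : ‖u‖ ≤ 1) :
    (z.1, z.2 * u) ∈ B2 := by
  have hz' : ‖z.1‖ ^ 2 + ‖z.2‖ ^ 2 < 1 := hz
  have hle : ‖z.2 * u‖ ≤ ‖z.2‖ := by
    simpa [norm_mul] using mul_le_of_le_one_right (norm_nonneg z.2) hu
  show ‖z.1‖ ^ 2 + ‖z.2 * u‖ ^ 2 < 1
  nlinarith [pow_le_pow_left₀ (norm_nonneg _) hle 2]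

lemma re_one_sub_pos {a : ℂ} (ha : ‖a‖ < 1) : 0 < (1 - a).re := by
  simp only [sub_re, one_re]
  linarith [re_le_norm a]

lemma norm_exp_neg_div_le_one {c : ℂ} (hc : 0 < c.re) {t : ℝ} (ht : 0 ≤ t) :
    ‖exp (-(t : ℂ) / c)‖ ≤ 1 := by
  have hinv : 0 < (c⁻¹).re := by
    rw [inv_re]
    exact div_pos hc (normSq_pos.2 fun h => by simp [h] at hc)
  have hre : (-(t : ℂ) / c).re = -t * (c⁻¹).re := by
    rw [div_eq_mul_inv, ← ofReal_neg, re_ofReal_mul]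
  rw [norm_exp, Real.exp_le_one_iff, hre]
  nlinarith

lemma hasDerivAt_mul_exp_neg_div (b c : ℂ) (t : ℝ) :
    HasDerivAt (fun s : ℝ => b * exp (-(s : ℂ) / c)) (-(b * exp (-(t : ℂ) / c)) / c) t :=
  (((hasDerivAt_neg (t : ℂ)).div_const c).cexp.comp_ofReal.const_mul b).congr_deriv (by ring)

theorem example_generator_ball2
    (F : ℂ × ℂ → ℂ × ℂ)
    (hF : ∀ z : ℂ × ℂ, F z = (0, -z.2 / (1 - z.1))) :
    ∀ z ∈ B2, ∃ w : ℝ → ℂ × ℂ,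
      (∀ t : ℝ, w t = (z.1, z.2 * Complex.exp (-(t : ℂ) / (1 - z.1)))) ∧
      w 0 = z ∧
      (∀ t : ℝ, HasDerivAt w (F (w t)) t) ∧
      (∀ t : ℝ, 0 ≤ t → w t ∈ B2) ∧
      (z.2 = 0 → ∀ t : ℝ, w t = z) := by
  intro z hz
  have hc : 0 < (1 - z.1).re := re_one_sub_pos (norm_fst_lt_one_of_mem_B2 hz)
  refine ⟨fun t => (z.1, z.2 * exp (-(t : ℂ) / (1 - z.1))), fun t => rfl, by simp,
    fun t => ?_, fun t ht => mk_mul_mem_B2 hz (norm_exp_neg_div_le_one hc ht),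
    fun h0 t => Prod.ext rfl (by simp [h0])⟩
  rw [hF]
  exact (hasDerivAt_const t z.1).prodMk (hasDerivAt_mul_exp_neg_div _ _ t)
end

section
/- Let Re β > 0 and s = √(2 Re β). The map η : 𝔹² → 𝔹² defined by η(z₁,z₂) = ((−s z₂ + (1−β) z₁ + β)/(−s z₂ − β z₁ + 1 + β), (z₂ + s z₁ − s)/(−s z₂ − β z₁ + 1 + β)) is a well-defined holomorphic self-map of 𝔹² that maps the ball into itself, fixes e₁ = (1,0) in the sense of boundary limits, and is a bijection of 𝔹². -/
/-!
The map is the action on the affine chart `w₂ = 1` of `ℂP²` of the matrix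
`A = [[1-β, -s, β], [s, 1, -s], [-β, -s, 1+β]]`. Since `s² = 2 Re β`, `A` preserves the Hermitian
form `Q w = |w₀|² + |w₁|² - |w₂|²` of signature `(2, 1)`, and the ball is the set of `Q`-negative
lines, so `η` maps it into itself (a negative vector has `w₂ ≠ 0`, which is why the denominator does
not vanish). The matrix of the same shape with `(conj β, -s)` is again `Q`-preserving and inverts `A`,
which makes `η` a bijection; `A` fixes `(1, 0, 1)`, so `η` is continuous at `e₁` and fixes it.
-/

open Complex Filter

open Matrix

def homogenize (z : ℂ × ℂ) : Fin 3 → ℂ := ![z.1, z.2, 1]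

noncomputable def dehomogenize (w : Fin 3 → ℂ) : ℂ × ℂ := (w 0 / w 2, w 1 / w 2)

noncomputable def projAction (A : Matrix (Fin 3) (Fin 3) ℂ) (z : ℂ × ℂ) : ℂ × ℂ :=
  dehomogenize (A *ᵥ homogenize z)

noncomputable def hermitianForm21 (w : Fin 3 → ℂ) : ℝ :=
  normSq (w 0) + normSq (w 1) - normSq (w 2)

theorem dehomogenize_homogenize (z : ℂ × ℂ) : dehomogenize (homogenize z) = z := by
  simp [dehomogenize, homogenize]

theorem dehomogenize_smul {c : ℂ} (hc : c ≠ 0) (w : Fin 3 → ℂ) :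
    dehomogenize (c • w) = dehomogenize w := by
  simp only [dehomogenize, Pi.smul_apply, smul_eq_mul, mul_div_mul_left _ _ hc]

theorem homogenize_dehomogenize {w : Fin 3 → ℂ} (hw : w 2 ≠ 0) :
    homogenize (dehomogenize w) = (w 2)⁻¹ • w := by
  ext i
  fin_cases i <;> simp [homogenize, dehomogenize, div_eq_inv_mul, hw]

theorem hermitianForm21_smul (c : ℂ) (w : Fin 3 → ℂ) :
    hermitianForm21 (c • w) = normSq c * hermitianForm21 w := by
  simp only [hermitianForm21, Pi.smul_apply, smul_eq_mul, map_mul]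
  ring

theorem mem_B2_iff_hermitianForm21_neg (z : ℂ × ℂ) :
    z ∈ B2 ↔ hermitianForm21 (homogenize z) < 0 := by
  simp [B2, hermitianForm21, homogenize, ← Complex.sq_norm]

theorem ne_zero_of_hermitianForm21_neg {w : Fin 3 → ℂ} (hw : hermitianForm21 w < 0) :
    w 2 ≠ 0 := by
  intro h
  simp only [hermitianForm21, h, map_zero, sub_zero] at hw
  linarith [normSq_nonneg (w 0), normSq_nonneg (w 1)]

theorem projAction_one (z : ℂ × ℂ) : projAction 1 z = z := by
  rw [projAction, Matrix.one_mulVec, dehomogenize_homogenize]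

theorem projAction_projAction (A B : Matrix (Fin 3) (Fin 3) ℂ) {z : ℂ × ℂ}
    (hz : (A *ᵥ homogenize z) 2 ≠ 0) :
    projAction B (projAction A z) = projAction (B * A) z := by
  rw [projAction, projAction, homogenize_dehomogenize hz, Matrix.mulVec_smul,
    dehomogenize_smul (inv_ne_zero hz), Matrix.mulVec_mulVec, projAction]

theorem continuousAt_projAction (A : Matrix (Fin 3) (Fin 3) ℂ) {z : ℂ × ℂ}
    (hz : (A *ᵥ homogenize z) 2 ≠ 0) : ContinuousAt (projAction A) z := by
  have hcont : Continuous fun z => A *ᵥ homogenize z := by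
    simp only [homogenize]
    fun_prop
  have hcoord (i : Fin 3) : ContinuousAt (fun z => (A *ᵥ homogenize z) i) z :=
    ((continuous_apply i).comp hcont).continuousAt
  exact ((hcoord 0).div (hcoord 2) hz).prodMk ((hcoord 1).div (hcoord 2) hz)

theorem tendsto_projAction_nhdsWithin_of_mulVec_homogenize_eq {A : Matrix (Fin 3) (Fin 3) ℂ}
    {z : ℂ × ℂ} (hz : A *ᵥ homogenize z = homogenize z) (S : Set (ℂ × ℂ)) :
    Tendsto (projAction A) (nhdsWithin z S) (nhds z) := by
  have hfix : projAction A z = z := by rw [projAction, hz, dehomogenize_homogenize]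
  have hcont := continuousAt_projAction A (z := z) (by rw [hz]; exact one_ne_zero)
  exact tendsto_nhdsWithin_of_tendsto_nhds (hfix ▸ hcont.tendsto :)

section Isometry

variable {A : Matrix (Fin 3) (Fin 3) ℂ}
  (hA : ∀ w, hermitianForm21 (A *ᵥ w) = hermitianForm21 w)
include hA

theorem mulVec_homogenize_two_ne_zero {z : ℂ × ℂ} (hz : z ∈ B2) :
    (A *ᵥ homogenize z) 2 ≠ 0 := by
  rw [mem_B2_iff_hermitianForm21_neg, ← hA] at hz
  exact ne_zero_of_hermitianForm21_neg hz

theorem mapsTo_projAction : Set.MapsTo (projAction A) B2 B2 := by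
  intro z hz
  have hw := mulVec_homogenize_two_ne_zero hA hz
  rw [mem_B2_iff_hermitianForm21_neg] at hz ⊢
  rw [projAction, homogenize_dehomogenize hw, hermitianForm21_smul, hA]
  exact mul_neg_of_pos_of_neg (normSq_pos.2 (inv_ne_zero hw)) hz

theorem bijOn_projAction {B : Matrix (Fin 3) (Fin 3) ℂ}
    (hB : ∀ w, hermitianForm21 (B *ᵥ w) = hermitianForm21 w)
    (hBA : B * A = 1) : Set.BijOn (projAction A) B2 B2 := by
  have hAB : A * B = 1 := mul_eq_one_comm.1 hBA
  refine Set.InvOn.bijOn ⟨fun z hz => ?_, fun z hz => ?_⟩ (mapsTo_projAction hA)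
    (mapsTo_projAction hB)
  · rw [projAction_projAction A B (mulVec_homogenize_two_ne_zero hA hz), hBA, projAction_one]
  · rw [projAction_projAction B A (mulVec_homogenize_two_ne_zero hB hz), hAB, projAction_one]

end Isometry

def parabolicMatrix (β s : ℂ) : Matrix (Fin 3) (Fin 3) ℂ :=
  !![1 - β, -s, β; s, 1, -s; -β, -s, 1 + β]

theorem parabolicMatrix_mul_parabolicMatrix {β γ s : ℂ} (h : s * s = β + γ) :
    parabolicMatrix γ (-s) * parabolicMatrix β s = 1 := by
  obtain rfl : γ = s * s - β := eq_sub_of_add_eq' h.symm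
  ext i j
  fin_cases i <;> fin_cases j <;> simp [parabolicMatrix, Matrix.mul_apply, Fin.sum_univ_three] <;>
    ring

theorem hermitianForm21_vec3 (a b c : ℂ) :
    hermitianForm21 ![a, b, c] = normSq a + normSq b - normSq c := rfl

theorem parabolicMatrix_mulVec (β s : ℂ) (w : Fin 3 → ℂ) :
    parabolicMatrix β s *ᵥ w =
      ![(1 - β) * w 0 - s * w 1 + β * w 2, s * w 0 + w 1 - s * w 2,
        -β * w 0 - s * w 1 + (1 + β) * w 2] := by
  ext i
  fin_cases i <;> simp [parabolicMatrix, Matrix.mulVec, dotProduct, Fin.sum_univ_three] <;> ring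

-- `Q (A w) - Q w = (s² - 2 Re β) |w₀ - w₂|²`.
theorem hermitianForm21_parabolicMatrix_mulVec {β : ℂ} {s : ℝ} (h : s * s = 2 * β.re)
    (w : Fin 3 → ℂ) : hermitianForm21 (parabolicMatrix β s *ᵥ w) = hermitianForm21 w := by
  rw [parabolicMatrix_mulVec, hermitianForm21_vec3, hermitianForm21]
  simp only [normSq_apply, add_re, add_im, sub_re, sub_im, mul_re, mul_im, neg_re, neg_im,
    one_re, one_im, ofReal_re, ofReal_im]
  linear_combination (((w 0).re - (w 2).re) ^ 2 + ((w 0).im - (w 2).im) ^ 2) * h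

theorem parabolicMatrix_mulVec_homogenize_two (β s : ℂ) (z : ℂ × ℂ) :
    (parabolicMatrix β s *ᵥ homogenize z) 2 = -s * z.2 - β * z.1 + 1 + β := by
  simp only [parabolicMatrix_mulVec, homogenize, cons_val, cons_val_zero, cons_val_one, mul_one]
  ring

theorem projAction_parabolicMatrix (β s : ℂ) (z : ℂ × ℂ) :
    projAction (parabolicMatrix β s) z =
      ((-s * z.2 + (1 - β) * z.1 + β) / (-s * z.2 - β * z.1 + 1 + β),
        (z.2 + s * z.1 - s) / (-s * z.2 - β * z.1 + 1 + β)) := by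
  simp only [projAction, dehomogenize, parabolicMatrix_mulVec, homogenize, cons_val_zero,
    cons_val_one, cons_val, mul_one, Prod.mk.injEq]
  constructor <;> ring

theorem parabolicMatrix_mulVec_homogenize_e1 (β s : ℂ) :
    parabolicMatrix β s *ᵥ homogenize (1, 0) = homogenize (1, 0) := by
  rw [parabolicMatrix_mulVec]
  simp [homogenize]

theorem parabolic_automorphism_ball2
    (β : ℂ) (hβ : 0 < β.re) (s : ℝ) (hs : s = Real.sqrt (2 * β.re))
    (η : ℂ × ℂ → ℂ × ℂ)
    (hη : ∀ z : ℂ × ℂ,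
      η z = ((-(s:ℂ) * z.2 + (1 - β) * z.1 + β) / (-(s:ℂ) * z.2 - β * z.1 + 1 + β),
             (z.2 + (s:ℂ) * z.1 - (s:ℂ)) / (-(s:ℂ) * z.2 - β * z.1 + 1 + β))) :
    (∀ z ∈ B2, -(s:ℂ) * z.2 - β * z.1 + 1 + β ≠ 0) ∧
    Set.MapsTo η B2 B2 ∧
    Set.BijOn η B2 B2 ∧
    Tendsto η (nhdsWithin ((1 : ℂ), (0 : ℂ)) B2) (nhds ((1 : ℂ), (0 : ℂ))) := by
  have hss : s * s = 2 * β.re := hs ▸ Real.mul_self_sqrt (by linarith)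
  have hA := hermitianForm21_parabolicMatrix_mulVec hss
  have hB := hermitianForm21_parabolicMatrix_mulVec (β := starRingEnd ℂ β) (s := -s)
    (by rw [conj_re, neg_mul_neg, hss])
  have hsc : (s : ℂ) * s = β + starRingEnd ℂ β := by
    rw [add_conj, ← ofReal_mul, hss, ofReal_mul, ofReal_ofNat]
  obtain rfl : η = projAction (parabolicMatrix β s) :=
    funext fun z => (hη z).trans (projAction_parabolicMatrix β s z).symm
  refine ⟨fun z hz => ?_, mapsTo_projAction hA, bijOn_projAction hA (by exact_mod_cast hB)
    (parabolicMatrix_mul_parabolicMatrix hsc), ?_⟩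
  · rw [← parabolicMatrix_mulVec_homogenize_two]
    exact mulVec_homogenize_two_ne_zero hA hz
  · exact tendsto_projAction_nhdsWithin_of_mulVec_homogenize_eq
      (parabolicMatrix_mulVec_homogenize_e1 β s) B2
end

section
/- For s ≥ 0, θ ∈ ℝ, β = s²/2, the map H_{s,θ}(z₁,z₂) = ((−s z₂ + (1−β) z₁ + β)/(−s z₂ − β z₁ + 1 + β), e^{iθ}(z₂ + s z₁ − s)/(−s z₂ − β z₁ + 1 + β)) is an automorphism of 𝔹², and its complex differential at the boundary point e₁ = (1,0) is the matrix [[1, 0], [s e^{iθ}, e^{iθ}]]. -/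
/-!
`K_s := parabolicMap s` is the projectivisation of the linear map of `ℂ³` sending `(z₁, z₂, 1)`
to `(parabolicNum s z, parabolicDen s z)`. That map preserves the Hermitian form
`|w₁|² + |w₂|² - |w₃|²`, so the denominator has no zero on the ball and `K_s` maps the ball into
itself. The matrix for `-s` is inverse to the one for `s`, so `K_{-s}` inverts `K_s`.
`H` is `K_s` followed by the rotation `(z₁, z₂) ↦ (z₁, e^{iθ} z₂)`; at `e₁` the denominator
equals `1`, and the quotient rule gives the differential.
-/

open Complex

theorem HasFDerivAt.div {E 𝕜 : Type*} [NontriviallyNormedField 𝕜] [NormedAddCommGroup E]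
    [NormedSpace 𝕜 E] {c d : E → 𝕜} {c' d' : E →L[𝕜] 𝕜} {x : E}
    (hc : HasFDerivAt c c' x) (hd : HasFDerivAt d d' x) (hx : d x ≠ 0) :
    HasFDerivAt (fun y => c y / d y) ((d x ^ 2)⁻¹ • (d x • c' - c x • d')) x := by
  simp only [div_eq_mul_inv]
  refine (hc.fun_mul ((hasFDerivAt_inv hx).comp x hd)).congr_fderiv ?_
  ext v
  simp
  field_simp
  ring

noncomputable section

def parabolicNum (s : ℝ) (z : ℂ × ℂ) : ℂ × ℂ :=
  (-(s:ℂ) * z.2 + (1 - (s:ℂ)^2/2) * z.1 + (s:ℂ)^2/2, z.2 + s * z.1 - s)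

def parabolicDen (s : ℝ) (z : ℂ × ℂ) : ℂ :=
  -(s:ℂ) * z.2 - (s:ℂ)^2/2 * z.1 + 1 + (s:ℂ)^2/2

def parabolicMap (s : ℝ) (z : ℂ × ℂ) : ℂ × ℂ :=
  ((parabolicNum s z).1 / parabolicDen s z, (parabolicNum s z).2 / parabolicDen s z)

lemma mem_B2_iff_normSq {z : ℂ × ℂ} : z ∈ B2 ↔ normSq z.1 + normSq z.2 < 1 := by
  simp only [B2, Set.mem_ofPred_eq, Complex.sq_norm]

lemma normSq_parabolicNum_sub_normSq_parabolicDen (s : ℝ) (z : ℂ × ℂ) :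
    normSq (parabolicNum s z).1 + normSq (parabolicNum s z).2 - normSq (parabolicDen s z) =
      normSq z.1 + normSq z.2 - 1 := by
  apply ofReal_injective
  push_cast [← mul_conj]
  simp only [parabolicNum, parabolicDen, map_add, map_sub, map_mul, map_neg, map_one, map_div₀,
    map_pow, map_ofNat, conj_ofReal]
  ring

lemma parabolicDen_ne_zero (s : ℝ) {z : ℂ × ℂ} (hz : z ∈ B2) : parabolicDen s z ≠ 0 := by
  rw [mem_B2_iff_normSq] at hz
  have := normSq_parabolicNum_sub_normSq_parabolicDen s z
  intro h
  rw [h, map_zero] at this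
  linarith [normSq_nonneg (parabolicNum s z).1, normSq_nonneg (parabolicNum s z).2]

lemma mapsTo_parabolicMap (s : ℝ) : Set.MapsTo (parabolicMap s) B2 B2 := by
  intro z hz
  have hD := normSq_pos.2 (parabolicDen_ne_zero s hz)
  have := normSq_parabolicNum_sub_normSq_parabolicDen s z
  rw [mem_B2_iff_normSq] at hz ⊢
  rw [parabolicMap, map_div₀, map_div₀, ← add_div, div_lt_one hD]
  linarith

lemma parabolicMap_neg_parabolicMap (s : ℝ) {z : ℂ × ℂ} (hz : parabolicDen s z ≠ 0) :
    parabolicMap (-s) (parabolicMap s z) = z := by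
  set w := parabolicMap s z
  have hw₁ : w.1 * parabolicDen s z = (parabolicNum s z).1 := div_mul_cancel₀ _ hz
  have hw₂ : w.2 * parabolicDen s z = (parabolicNum s z).2 := div_mul_cancel₀ _ hz
  simp only [parabolicNum, parabolicDen] at hw₁ hw₂
  have hden : parabolicDen (-s) w * parabolicDen s z = 1 := by
    simp only [parabolicDen]; push_cast
    linear_combination (s:ℂ) * hw₂ - (s:ℂ)^2/2 * hw₁
  have hnum₁ : (parabolicNum (-s) w).1 * parabolicDen s z = z.1 := by
    simp only [parabolicNum, parabolicDen]; push_cast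
    linear_combination (s:ℂ) * hw₂ + (1 - (s:ℂ)^2/2) * hw₁
  have hnum₂ : (parabolicNum (-s) w).2 * parabolicDen s z = z.2 := by
    simp only [parabolicNum, parabolicDen]; push_cast
    linear_combination hw₂ - (s:ℂ) * hw₁
  have hD' : parabolicDen (-s) w ≠ 0 := left_ne_zero_of_mul_eq_one hden
  ext
  · refine div_eq_of_eq_mul hD' ?_
    linear_combination (-(parabolicNum (-s) w).1) * hden + parabolicDen (-s) w * hnum₁
  · refine div_eq_of_eq_mul hD' ?_
    linear_combination (-(parabolicNum (-s) w).2) * hden + parabolicDen (-s) w * hnum₂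

lemma bijOn_parabolicMap (s : ℝ) : Set.BijOn (parabolicMap s) B2 B2 := by
  refine Set.InvOn.bijOn ⟨?_, ?_⟩ (mapsTo_parabolicMap s) (mapsTo_parabolicMap (-s))
  · exact fun z hz => parabolicMap_neg_parabolicMap s (parabolicDen_ne_zero s hz)
  · intro w hw
    simpa using parabolicMap_neg_parabolicMap (-s) (parabolicDen_ne_zero (-s) hw)

lemma hasFDerivAt_of_eq_affine {f : ℂ × ℂ → ℂ} (a b c : ℂ)
    (hf : ∀ z, f z = a * z.1 + b * z.2 + c) (x : ℂ × ℂ) :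
    HasFDerivAt f (a • ContinuousLinearMap.fst ℂ ℂ ℂ + b • ContinuousLinearMap.snd ℂ ℂ ℂ) x := by
  rw [funext hf]
  simpa using
    ((a • ContinuousLinearMap.fst ℂ ℂ ℂ + b • ContinuousLinearMap.snd ℂ ℂ ℂ).hasFDerivAt.add_const c)

lemma hasFDerivAt_parabolicMap_one_zero (s : ℝ) :
    HasFDerivAt (parabolicMap s)
      ((ContinuousLinearMap.fst ℂ ℂ ℂ).prod
        ((s:ℂ) • ContinuousLinearMap.fst ℂ ℂ ℂ + ContinuousLinearMap.snd ℂ ℂ ℂ)) (1, 0) := by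
  have hN₁ := hasFDerivAt_of_eq_affine (f := fun z => (parabolicNum s z).1)
    (1 - (s:ℂ)^2/2) (-s) ((s:ℂ)^2/2) (fun z => by simp only [parabolicNum]; ring) (1, 0)
  have hN₂ := hasFDerivAt_of_eq_affine (f := fun z => (parabolicNum s z).2)
    s 1 (-s) (fun z => by simp only [parabolicNum]; ring) (1, 0)
  have hD := hasFDerivAt_of_eq_affine (f := parabolicDen s)
    (-(s:ℂ)^2/2) (-s) (1 + (s:ℂ)^2/2) (fun z => by simp only [parabolicDen]; ring) (1, 0)
  have hD₁ : parabolicDen s (1, 0) = 1 := by simp only [parabolicDen]; ring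
  refine ((hN₁.div hD (by simp [hD₁])).prodMk (hN₂.div hD (by simp [hD₁]))).congr_fderiv ?_
  ext <;> simp [hD₁, parabolicNum]
  ring

def rotateSnd (u : ℂ) : ℂ × ℂ →L[ℂ] ℂ × ℂ :=
  (ContinuousLinearMap.fst ℂ ℂ ℂ).prod (u • ContinuousLinearMap.snd ℂ ℂ ℂ)

@[simp]
lemma rotateSnd_apply (u : ℂ) (z : ℂ × ℂ) : rotateSnd u z = (z.1, u * z.2) := rfl

lemma mapsTo_rotateSnd {u : ℂ} (hu : ‖u‖ = 1) : Set.MapsTo (rotateSnd u) B2 B2 := by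
  intro z hz
  simpa [B2, hu] using hz

lemma bijOn_rotateSnd {u : ℂ} (hu : ‖u‖ = 1) : Set.BijOn (rotateSnd u) B2 B2 := by
  have hu₀ : u ≠ 0 := norm_ne_zero_iff.1 (hu ▸ one_ne_zero)
  refine Set.InvOn.bijOn ⟨fun z _ => ?_, fun z _ => ?_⟩ (mapsTo_rotateSnd hu)
    (mapsTo_rotateSnd (u := u⁻¹) (by simp [hu])) <;> simp [hu₀]

end

theorem H_s_theta_automorphism_and_differential_general
    (s θ : ℝ) (β : ℝ) (hβ : β = s^2 / 2)
    (H : ℂ × ℂ → ℂ × ℂ)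
    (hH : ∀ z : ℂ × ℂ,
      H z = ((-(s:ℂ) * z.2 + (1 - (β:ℂ)) * z.1 + (β:ℂ)) /
               (-(s:ℂ) * z.2 - (β:ℂ) * z.1 + 1 + (β:ℂ)),
             Complex.exp (θ * Complex.I) * (z.2 + (s:ℂ) * z.1 - (s:ℂ)) /
               (-(s:ℂ) * z.2 - (β:ℂ) * z.1 + 1 + (β:ℂ)))) :
    Set.BijOn H B2 B2 ∧
    ∃ L : (ℂ × ℂ) →L[ℂ] (ℂ × ℂ),
      (∀ v : ℂ × ℂ,
        L v = (v.1, (s:ℂ) * Complex.exp (θ * Complex.I) * v.1 +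
                Complex.exp (θ * Complex.I) * v.2)) ∧
      HasFDerivAt H L ((1 : ℂ), (0 : ℂ)) := by
  have hH' : H = rotateSnd (exp (θ * I)) ∘ parabolicMap s := by
    funext z
    simp [hH, hβ, parabolicMap, parabolicNum, parabolicDen, mul_div_assoc]
  subst hH'
  refine ⟨(bijOn_rotateSnd (norm_exp_ofReal_mul_I θ)).comp (bijOn_parabolicMap s), _, fun v => ?_,
    (rotateSnd _).hasFDerivAt.comp _ (hasFDerivAt_parabolicMap_one_zero s)⟩
  simp
  ring

theorem H_s_theta_automorphism_and_differential
    (s θ : ℝ) (hs : 0 ≤ s) (β : ℝ) (hβ : β = s^2 / 2)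
    (H : ℂ × ℂ → ℂ × ℂ)
    (hH : ∀ z : ℂ × ℂ,
      H z = ((-(s:ℂ) * z.2 + (1 - (β:ℂ)) * z.1 + (β:ℂ)) /
               (-(s:ℂ) * z.2 - (β:ℂ) * z.1 + 1 + (β:ℂ)),
             Complex.exp (θ * Complex.I) * (z.2 + (s:ℂ) * z.1 - (s:ℂ)) /
               (-(s:ℂ) * z.2 - (β:ℂ) * z.1 + 1 + (β:ℂ)))) :
    Set.BijOn H B2 B2 ∧
    ∃ L : (ℂ × ℂ) →L[ℂ] (ℂ × ℂ),
      (∀ v : ℂ × ℂ,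
        L v = (v.1, (s:ℂ) * Complex.exp (θ * Complex.I) * v.1 +
                Complex.exp (θ * Complex.I) * v.2)) ∧
      HasFDerivAt H L ((1 : ℂ), (0 : ℂ)) :=
  H_s_theta_automorphism_and_differential_general s θ β hβ H hH
end
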